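/- arXiv:math/9908159 — 3 statements merged into one kernel-verified Lean document; each statement's English description precedes it below -/
import Mathlib

section
/- Assume λ is a strong limit singular cardinal of cofinality σ, κ is a regular cardinal, and σ < κ < λ. Then there exists a stationary subset S of [λ]^{<κ} such that every unbounded subset of S is stationary. -/
open Cardinal Set

noncomputable section

/-- A finitary function on the ordinals: an arity `n` together with an
`n`-ary function on ordinals. -/
abbrev FinFun := Σ n : ℕ, (Fin n → Ordinal.{0}) → Ordinal.{0}

/-- `[λ]^{<κ}`: the collection of subsets of `λ` (viewed as the set of
ordinals `< λ`) of cardinality `< κ`. -/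
def smallSubsets (lam kap : Cardinal.{0}) : Set (Set Ordinal.{0}) :=
  {a | (∀ x ∈ a, x < lam.ord) ∧ Cardinal.mk ↥a < Cardinal.lift.{1} kap}

/-- The countable family `F` consists of finitary functions *on `λ`*. -/
def FamOn (lam : Cardinal.{0}) (F : Set FinFun) : Prop :=
  ∀ f ∈ F, ∀ x : Fin f.1 → Ordinal.{0}, (∀ i, x i < lam.ord) → f.2 x < lam.ord

/-- The club `C_F` of `[λ]^{<κ}` associated to a family `F` of finitary
functions on `λ`: the members `a` of `[λ]^{<κ}` closed under every function
of `F` and such that `a ∩ κ` is an ordinal (an initial segment of `κ`). -/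
def clubOf (lam kap : Cardinal.{0}) (F : Set FinFun) : Set (Set Ordinal.{0}) :=
  {a | a ∈ smallSubsets lam kap ∧
    (∀ f ∈ F, ∀ x : Fin f.1 → Ordinal.{0}, (∀ i, x i ∈ a) → f.2 x ∈ a) ∧
    ∃ β < kap.ord, a ∩ Set.Iio kap.ord = Set.Iio β}

/-- `C` is a club of `[λ]^{<κ}`. -/
def IsClubPkl (lam kap : Cardinal.{0}) (C : Set (Set Ordinal.{0})) : Prop :=
  ∃ F : Set FinFun, F.Countable ∧ FamOn lam F ∧ C = clubOf lam kap F

/-- `S` is a stationary subset of `[λ]^{<κ}`: it meets every club. -/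
def IsStationaryPkl (lam kap : Cardinal.{0}) (S : Set (Set Ordinal.{0})) : Prop :=
  ∀ C, IsClubPkl lam kap C → (S ∩ C).Nonempty

/-- `S` is an unbounded subset of `[λ]^{<κ}`: every member of `[λ]^{<κ}`
is contained in some member of `S`. -/
def IsUnbounded (lam kap : Cardinal.{0}) (S : Set (Set Ordinal.{0})) : Prop :=
  ∀ b ∈ smallSubsets lam kap, ∃ a ∈ S, b ⊆ a

/-- The club filter `E_{λ,κ}`: the filter generated by the clubs of
`[λ]^{<κ}`. -/
def clubFilter (lam kap : Cardinal.{0}) : Filter (Set Ordinal.{0}) :=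
  Filter.generate {C | IsClubPkl lam kap C}

/-! Since `λ` is a strong limit, there are at most `λ` functions `(δ + 1)ⁿ → δ + 1` with `δ < λ`,
so one countable family `G` of finitary functions on `λ` decodes all of them: a set closed under `G`
that contains the code of such a piece of a function `f` is closed under that piece of `f`.
Take `S = C_G`, a club. For a club `C_F`, the codes of the pieces of the functions of `F` over a
cofinal subset of `λ` of size `cf λ < κ` form a set `b ∈ [λ]^{<κ}`, and every member of `S`
containing `b` is closed under `F`, i.e. lies in `C_F`. An unbounded `T ⊆ S` has such a member. -/

namespace Cardinal

theorem IsStrongLimit.lift {c : Cardinal.{u}} (h : c.IsStrongLimit) :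
    (Cardinal.lift.{v} c).IsStrongLimit := by
  refine ⟨by simpa using h.ne_zero, fun x hx => ?_⟩
  obtain ⟨y, rfl⟩ := mem_range_lift_of_le hx.le
  rw [← lift_two_power, lift_lt]
  exact h.isStrongPrelimit (lift_lt.mp hx)

theorem IsStrongLimit.power_lt {a b c : Cardinal} (h : c.IsStrongLimit) (ha : a < c)
    (hb : b < c) : a ^ b < c :=
  calc a ^ b ≤ (2 ^ a) ^ b := power_le_power_right (cantor a).le
    _ = 2 ^ (a * b) := power_mul.symm
    _ < c := h.isStrongPrelimit (mul_lt_of_lt h.aleph0_le ha hb)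

theorem mk_Iic_ordinal_lt {o : Ordinal.{u}} {c : Cardinal.{u}} (hc : ℵ₀ ≤ c) (ho : o < c.ord) :
    #(Iic o) < Cardinal.lift.{u + 1} c := by
  rw [← Order.Iio_succ, mk_Iio_ordinal, lift_lt, ← lt_ord]
  exact (isSuccLimit_ord hc).succ_lt ho

end Cardinal

section Iterate

variable {α : Type u} {f : Set α → Set α}

theorem mk_iUnion_iterate_lt {K : Cardinal.{u}} (hK : K.IsRegular) (hK₀ : ℵ₀ < K)
    (hf : ∀ s : Set α, #s < K → #(f s) < K) {s : Set α} (hs : #s < K) :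
    #(⋃ m, f^[m] s) < K := by
  have := (mk_iUnion_le_sum_mk_lift (f := fun m => f^[m] s)).trans_lt <|
    sum_lt_lift_of_isRegular.{0, u} hK (by simpa using hK₀)
      (Function.Iterate.rec (fun s : Set α => #s < K) hs hf)
  simpa using this

theorem exists_forall_mem_iterate {ι : Type*} [Finite ι] (hf : ∀ s, s ⊆ f s) {s : Set α}
    {x : ι → α} (hx : ∀ i, x i ∈ ⋃ m, f^[m] s) : ∃ m, ∀ i, x i ∈ f^[m] s := by
  choose m hm using fun i => mem_iUnion.mp (hx i)
  obtain ⟨M, hM⟩ := Finite.exists_le m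
  exact ⟨M, fun i => Function.monotone_iterate_of_id_le hf (hM i) s (hm i)⟩

end Iterate

theorem Ordinal.exists_inter_Iio_eq_Iio {a : Set Ordinal.{u}} {o : Ordinal.{u}}
    (ha : IsLowerSet (a ∩ Iio o)) (hcard : #(a ∩ Iio o : Set Ordinal) < #(Iio o)) :
    ∃ β < o, a ∩ Iio o = Iio β := by
  obtain huniv | ⟨β, hβ⟩ := ha.eq_univ_or_Iio
  · exact absurd (huniv ▸ mem_univ o : o ∈ a ∩ Iio o).2 (lt_irrefl o)
  refine ⟨β, lt_of_le_of_ne ?_ ?_, hβ⟩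
  · by_contra! h
    exact lt_irrefl o (hβ.symm ▸ (h : o ∈ Iio β) : o ∈ a ∩ Iio o).2
  · rintro rfl
    exact hcard.ne (by rw [hβ])

def IsClosedUnder (F : Set FinFun) (a : Set Ordinal.{0}) : Prop :=
  ∀ f ∈ F, ∀ x : Fin f.1 → Ordinal.{0}, (∀ i, x i ∈ a) → f.2 x ∈ a

-- The sets `Iic x` make the union of the iterates meet `κ` in an ordinal.
def clubStep (kap : Cardinal.{0}) (F : Set FinFun) (s : Set Ordinal.{0}) : Set Ordinal.{0} :=
  s ∪ range (fun p : Σ f : F, Fin f.1.1 → s => p.1.1.2 fun i => p.2 i) ∪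
    ⋃ x ∈ s ∩ Iio kap.ord, Iic x

section clubStep

variable {lam kap : Cardinal.{0}} {F : Set FinFun} {s : Set Ordinal.{0}}

theorem subset_clubStep : s ⊆ clubStep kap F s :=
  fun _ hx => Or.inl (Or.inl hx)

theorem apply_mem_clubStep {f : FinFun} (hf : f ∈ F) {x : Fin f.1 → Ordinal.{0}}
    (hx : ∀ i, x i ∈ s) : f.2 x ∈ clubStep kap F s :=
  Or.inl (Or.inr ⟨⟨⟨f, hf⟩, fun i => ⟨x i, hx i⟩⟩, rfl⟩)

theorem mem_clubStep_of_le {x y : Ordinal.{0}} (hx : x ∈ s) (hxk : x < kap.ord) (hyx : y ≤ x) :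
    y ∈ clubStep kap F s :=
  Or.inr (mem_biUnion ⟨hx, hxk⟩ hyx)

theorem clubStep_subset_Iio (hF : FamOn lam F) (hkl : kap ≤ lam) (hs : s ⊆ Iio lam.ord) :
    clubStep kap F s ⊆ Iio lam.ord := by
  rintro y ((hy | ⟨⟨f, x⟩, rfl⟩) | hy)
  · exact hs hy
  · exact hF f f.2 _ fun i => hs (x i).2
  · obtain ⟨x, ⟨-, hxk⟩, hyx⟩ := mem_iUnion₂.mp hy
    exact hyx.trans_lt (hxk.trans_le (ord_le_ord.mpr hkl))

theorem mk_clubStep_lt (hreg : kap.IsRegular) (hκ : ℵ₀ < kap) (hFc : F.Countable)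
    (hs : #s < lift.{1} kap) : #(clubStep kap F s) < lift.{1} kap := by
  have hK := hreg.lift.{1}
  have hK₀ : ℵ₀ < lift.{1} kap := by simpa using hκ
  have hmax : max #s ℵ₀ < lift.{1} kap := max_lt hs hK₀
  have himage : #(range fun p : Σ f : F, Fin f.1.1 → s => p.1.1.2 fun i => p.2 i) <
      lift.{1} kap := by
    refine mk_range_le.trans_lt ?_
    rw [mk_sigma]
    refine sum_lt_of_isRegular hK ?_ fun f => ?_
    · have := hFc.to_subtype
      exact mk_le_aleph0.trans_lt hK₀
    · have : #(Fin f.1.1 → s) ≤ max #s ℵ₀ := by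
        simpa using power_nat_le_max (c := #s) (n := f.1.1)
      exact this.trans_lt hmax
  have hlower : #(⋃ x ∈ s ∩ Iio kap.ord, Iic x) < lift.{1} kap := by
    refine (mk_biUnion_le _ _).trans_lt (mul_lt_of_lt hK.aleph0_le
      ((mk_le_mk_of_subset inter_subset_left).trans_lt hs) ?_)
    refine iSup_lt_of_lt_cof_ord ?_ fun x => mk_Iic_ordinal_lt hreg.aleph0_le x.2.2
    rw [hK.cof_ord]
    exact (mk_le_mk_of_subset inter_subset_left).trans_lt hs
  exact (mk_union_le _ _).trans_lt <| add_lt_of_lt hK.aleph0_le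
    ((mk_union_le _ _).trans_lt (add_lt_of_lt hK.aleph0_le hs himage)) hlower

end clubStep

theorem exists_superset_mem_clubOf {lam kap : Cardinal.{0}} (hreg : kap.IsRegular)
    (hκ : ℵ₀ < kap) (hkl : kap ≤ lam) {F : Set FinFun} (hFc : F.Countable) (hF : FamOn lam F)
    {b : Set Ordinal.{0}} (hb : b ∈ smallSubsets lam kap) :
    ∃ a ∈ clubOf lam kap F, b ⊆ a := by
  set a := ⋃ m, (clubStep kap F)^[m] b
  have hstep {m : ℕ} {x : Ordinal.{0}} (hx : x ∈ clubStep kap F ((clubStep kap F)^[m] b)) :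
      x ∈ a :=
    mem_iUnion.mpr ⟨m + 1, by rwa [Function.iterate_succ_apply']⟩
  have hsmall : #a < lift.{1} kap :=
    mk_iUnion_iterate_lt hreg.lift (by simpa using hκ)
      (fun _ hs => mk_clubStep_lt hreg hκ hFc hs) hb.2
  have hbounded : a ⊆ Iio lam.ord := iUnion_subset <|
    Function.Iterate.rec (· ⊆ Iio lam.ord) hb.1 fun _ => clubStep_subset_Iio hF hkl
  have hclosed : IsClosedUnder F a := fun f hf x hx => by
    obtain ⟨m, hm⟩ := exists_forall_mem_iterate (fun _ => subset_clubStep) hx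
    exact hstep (apply_mem_clubStep hf hm)
  have hlower : IsLowerSet (a ∩ Iio kap.ord) := fun x y hyx ⟨hxa, hxk⟩ => by
    obtain ⟨m, hm⟩ := mem_iUnion.mp hxa
    exact ⟨hstep (mem_clubStep_of_le hm hxk hyx), hyx.trans_lt hxk⟩
  obtain ⟨β, hβ, hβa⟩ := Ordinal.exists_inter_Iio_eq_Iio hlower <| by
    rw [mk_Iio_ordinal, card_ord]
    exact (mk_le_mk_of_subset inter_subset_left).trans_lt hsmall
  exact ⟨a, ⟨⟨hbounded, hsmall⟩, hclosed, β, hβ, hβa⟩,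
    subset_iUnion (fun m => (clubStep kap F)^[m] b) 0⟩

theorem clubOf_anti {lam kap : Cardinal.{0}} {F G : Set FinFun} (h : F ⊆ G) :
    clubOf lam kap G ⊆ clubOf lam kap F :=
  fun _ ⟨ha, hG, hβ⟩ => ⟨ha, fun f hf => hG f (h hf), hβ⟩

theorem empty_mem_smallSubsets {lam kap : Cardinal.{0}} (hkap : kap ≠ 0) :
    ∅ ∈ smallSubsets lam kap :=
  ⟨fun _ => False.elim, by simpa [pos_iff_ne_zero] using hkap⟩

theorem IsClubPkl.isStationaryPkl {lam kap : Cardinal.{0}} (hreg : kap.IsRegular)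
    (hκ : ℵ₀ < kap) (hkl : kap ≤ lam) {C : Set (Set Ordinal.{0})} (hC : IsClubPkl lam kap C) :
    IsStationaryPkl lam kap C := by
  rintro _ ⟨F, hFc, hF, rfl⟩
  obtain ⟨G, hGc, hG, rfl⟩ := hC
  obtain ⟨a, ha, -⟩ := exists_superset_mem_clubOf hreg hκ hkl (hGc.union hFc)
    (fun f hf => hf.elim (hG f) (hF f)) (empty_mem_smallSubsets hreg.pos.ne')
  exact ⟨a, clubOf_anti subset_union_left ha, clubOf_anti subset_union_right ha⟩

-- `Iic δ` stands for the ordinal `δ + 1`, so that the codomain is never empty.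
def BoundedFun (lam : Cardinal.{0}) (n : ℕ) : Type 1 :=
  Σ δ : Iio lam.ord, (Fin n → Iic δ.1) → Iic δ.1

namespace BoundedFun

variable {lam : Cardinal.{0}} {n : ℕ}

def eval (q : BoundedFun lam n) (x : Fin n → Ordinal.{0}) : Ordinal.{0} :=
  if h : ∀ i, x i ≤ q.1 then q.2 (fun i => ⟨x i, h i⟩) else 0

theorem eval_lt (hlam : lam ≠ 0) (q : BoundedFun lam n) (x : Fin n → Ordinal.{0}) :
    q.eval x < lam.ord := by
  unfold eval
  split
  · exact (q.2 _).2.trans_lt q.1.2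
  · simpa [pos_iff_ne_zero] using hlam

theorem exists_eval_eq (g : (Fin n → Ordinal.{0}) → Ordinal.{0}) {δ : Ordinal.{0}}
    (hδ : δ < lam.ord) :
    ∃ q : BoundedFun lam n, ∀ x, (∀ i, x i ≤ δ) → g x ≤ δ → q.eval x = g x := by
  classical
  refine ⟨⟨⟨δ, hδ⟩, fun y => if h : g (fun i => y i) ≤ δ then ⟨_, h⟩ else ⟨0, by simp⟩⟩,
    fun x hx hgx => ?_⟩
  simp [eval, hx, hgx]

theorem mk_le (hlam : lam.IsStrongLimit) : #(BoundedFun lam n) ≤ lift.{1} lam := by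
  have hL : (lift.{1} lam).IsStrongLimit := hlam.lift
  have hpiece (δ : Iio lam.ord) : #((Fin n → Iic δ.1) → Iic δ.1) < lift.{1} lam := by
    have hIic : #(Iic δ.1) < lift.{1} lam := mk_Iic_ordinal_lt hlam.aleph0_le δ.2
    have hdom : #(Fin n → Iic δ.1) < lift.{1} lam := by
      simpa using hL.power_lt hIic ((natCast_lt_aleph0 (n := n)).trans_le hL.aleph0_le)
    rw [← power_def]
    exact hL.power_lt hIic hdom
  calc #(BoundedFun lam n) = sum fun δ : Iio lam.ord => #((Fin n → Iic δ.1) → Iic δ.1) :=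
        mk_sigma _
    _ ≤ sum fun _ : Iio lam.ord => lift.{1} lam := sum_le_sum _ _ fun δ => (hpiece δ).le
    _ = lift.{1} lam := by
        rw [sum_const', mk_Iio_ordinal, card_ord, mul_eq_self hL.aleph0_le]

end BoundedFun

def IsCodingFamily (lam : Cardinal.{0}) (G : Set FinFun) : Prop :=
  ∀ f : FinFun, ∀ δ < lam.ord, ∃ γ < lam.ord, ∀ a, γ ∈ a → IsClosedUnder G a →
    ∀ x : Fin f.1 → Ordinal.{0}, (∀ i, x i ∈ a) → (∀ i, x i ≤ δ) → f.2 x ≤ δ → f.2 x ∈ a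

theorem exists_coding_family {lam : Cardinal.{0}} (hlam : lam.IsStrongLimit) :
    ∃ G : Set FinFun, G.Countable ∧ FamOn lam G ∧ IsCodingFamily lam G := by
  have e (n : ℕ) : BoundedFun lam n ↪ Iio lam.ord :=
    Classical.choice <| (le_def _ _).mp <| by
      simpa [mk_Iio_ordinal] using BoundedFun.mk_le (n := n) hlam
  let code (n : ℕ) (q : BoundedFun lam n) : Ordinal.{0} := e n q
  have hcode (n : ℕ) : (code n).Injective := Subtype.val_injective.comp (e n).injective
  -- `decode n γ` is the function coded by `γ`; `G` consists of the maps `(γ, x) ↦ decode n γ x`.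
  let decode (n : ℕ) (γ : Ordinal.{0}) (x : Fin n → Ordinal.{0}) : Ordinal.{0} :=
    (Function.partialInv (code n) γ).elim 0 (·.eval x)
  refine ⟨range fun n => ⟨n + 1, fun y => decode n (y 0) (Fin.tail y)⟩, countable_range _,
    ?_, ?_⟩
  · rintro _ ⟨n, rfl⟩ y -
    dsimp only [decode]
    cases Function.partialInv (code n) (y 0) with
    | none => simpa [pos_iff_ne_zero] using hlam.ne_zero
    | some q => exact q.eval_lt hlam.ne_zero _
  · rintro ⟨n, g⟩ δ hδ
    obtain ⟨q, hq⟩ := BoundedFun.exists_eval_eq g hδ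
    refine ⟨code n q, (e n q).2, fun a hγ hG x hx hxδ hgδ => ?_⟩
    have := hG _ ⟨n, rfl⟩ (Fin.cons (code n q) x) (Fin.cases hγ hx)
    simpa [decode, Function.partialInv_left (hcode n), hq x hxδ hgδ] using this

theorem IsCodingFamily.exists_small_codes {lam kap : Cardinal.{0}} {G : Set FinFun}
    (hG : IsCodingFamily lam G) (hκ : ℵ₀ < kap) (hcof : lam.ord.cof < kap) {F : Set FinFun}
    (hFc : F.Countable) (hF : FamOn lam F) :
    ∃ b ∈ smallSubsets lam kap, ∀ a ∈ clubOf lam kap G, b ⊆ a → a ∈ clubOf lam kap F := by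
  obtain ⟨B, hBcof, hBcard⟩ := Order.exists_cof_eq (Iio lam.ord)
  rw [Ordinal.cof_Iio, ← Ordinal.lift_cof] at hBcard
  choose γ hγlt hγ using fun (f : F) (δ : B) => hG f δ.1.1 δ.1.2
  refine ⟨range fun p : F × B => γ p.1 p.2, ⟨?_, ?_⟩, fun a ha hba => ⟨ha.1, ?_, ha.2.2⟩⟩
  · rintro _ ⟨p, rfl⟩
    exact hγlt _ _
  · have hK₀ : ℵ₀ ≤ lift.{1} kap := by simpa using hκ.le
    have hF : #F < lift.{1} kap := by
      have := hFc.to_subtype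
      exact mk_le_aleph0.trans_lt (by simpa using hκ)
    refine mk_range_le.trans_lt ?_
    rw [mk_prod, lift_id, lift_id]
    exact mul_lt_of_lt hK₀ hF (by rwa [hBcard, lift_lt])
  · intro f hf x hx
    have hxlt (i : Fin f.1) : x i < lam.ord := ha.1.1 _ (hx i)
    have hfx : f.2 x < lam.ord := hF f hf x hxlt
    set μ := max (Finset.univ.sup x) (f.2 x)
    have hμ : μ < lam.ord :=
      max_lt ((Finset.sup_lt_iff (bot_le.trans_lt hfx)).mpr fun i _ => hxlt i) hfx
    obtain ⟨δ, hδB, hμδ⟩ := hBcof ⟨μ, hμ⟩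
    exact hγ ⟨f, hf⟩ ⟨δ, hδB⟩ a (hba ⟨(⟨f, hf⟩, ⟨δ, hδB⟩), rfl⟩) ha.2.1 x hx
      (fun i => ((Finset.le_sup (Finset.mem_univ i)).trans (le_max_left _ _)).trans hμδ)
      ((le_max_right _ _).trans hμδ)

theorem exists_stationary_all_unbounded_subsets_stationary_strongLimit_general
    (lam kap sigma : Cardinal.{0})
    (hsl : lam.IsStrongLimit)
    (hcof : lam.ord.cof = sigma)
    (hreg : kap.IsRegular)
    (hsk : sigma < kap) (hkl : kap < lam) :
    ∃ S ⊆ smallSubsets lam kap, IsStationaryPkl lam kap S ∧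
      ∀ T ⊆ S, IsUnbounded lam kap T → IsStationaryPkl lam kap T := by
  have hσ : ℵ₀ ≤ sigma := hcof ▸ Ordinal.aleph0_le_cof_iff.mpr
    (Ordinal.one_lt_cof_iff.mpr (isSuccLimit_ord hsl.aleph0_le))
  have hκ : ℵ₀ < kap := hσ.trans_lt hsk
  obtain ⟨G, hGc, hG, hcode⟩ := exists_coding_family hsl
  refine ⟨clubOf lam kap G, fun a ha => ha.1,
    IsClubPkl.isStationaryPkl hreg hκ hkl.le ⟨G, hGc, hG, rfl⟩, ?_⟩
  rintro T hTS hT _ ⟨F, hFc, hF, rfl⟩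
  obtain ⟨b, hb, hbF⟩ := hcode.exists_small_codes hκ (hcof ▸ hsk) hFc hF
  obtain ⟨a, haT, hba⟩ := hT b hb
  exact ⟨a, haT, hbF a (hTS haT) hba⟩

/-- If `λ` is a strong limit singular cardinal of cofinality `σ`, `κ` is
regular and `σ < κ < λ`, then there is a stationary subset of `[λ]^{<κ}`
all of whose unbounded subsets are stationary. -/
theorem exists_stationary_all_unbounded_subsets_stationary_strongLimit
    (lam kap sigma : Cardinal.{0})
    (hsl : lam.IsStrongLimit)
    (hcof : lam.ord.cof = sigma)
    (hsing : sigma < lam)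
    (hreg : kap.IsRegular)
    (hsk : sigma < kap) (hkl : kap < lam) :
    ∃ S ⊆ smallSubsets lam kap, IsStationaryPkl lam kap S ∧
      ∀ T ⊆ S, IsUnbounded lam kap T → IsStationaryPkl lam kap T :=
  exists_stationary_all_unbounded_subsets_stationary_strongLimit_general lam kap sigma hsl hcof hreg
    hsk hkl
end
end

section
/- Let κ be a regular uncountable cardinal and λ ≥ κ. If S ⊆ [λ]^{<κ} is stationary, then there is no injective function f : S → λ such that f(a) ∈ a for every a ∈ S. -/
open Cardinal Set

noncomputable section

/-!
Given an injective choice function `f` on `S`, each `γ < λ` is `f a` for at most one `a ∈ S`,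
and since `|a| < κ ≤ λ` we may choose `g γ < λ` outside that `a`. The sets closed under `g`
form a club, so some `a ∈ S` is closed under `g`; then `g (f a) ∈ a`, contradicting the choice
of `g (f a)`.
-/

theorem exists_lt_ord_notMem_of_mem_smallSubsets {lam kap : Cardinal.{0}} (hkl : kap ≤ lam)
    {a : Set Ordinal.{0}} (ha : a ∈ smallSubsets lam kap) : ∃ x < lam.ord, x ∉ a := by
  have hcard : Cardinal.mk ↥a < Cardinal.mk ↥(Iio lam.ord) := by
    rw [Cardinal.mk_Iio_ordinal, Cardinal.card_ord]
    exact ha.2.trans_le (Cardinal.lift_le.mpr hkl)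
  exact not_subset.mp fun h => (Cardinal.mk_le_mk_of_subset h).not_gt hcard

abbrev FinFun.ofUnary (g : Ordinal.{0} → Ordinal.{0}) : FinFun := ⟨1, fun x => g (x 0)⟩

theorem isClubPkl_clubOf_ofUnary {lam : Cardinal.{0}} (kap : Cardinal.{0})
    {g : Ordinal.{0} → Ordinal.{0}} (hg : MapsTo g (Iio lam.ord) (Iio lam.ord)) :
    IsClubPkl lam kap (clubOf lam kap {FinFun.ofUnary g}) := by
  refine ⟨_, countable_singleton _, ?_, rfl⟩
  rintro _ rfl x hx
  exact hg (hx 0)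

theorem IsStationaryPkl.exists_mem_mapsTo {lam kap : Cardinal.{0}} {S : Set (Set Ordinal.{0})}
    (hstat : IsStationaryPkl lam kap S) {g : Ordinal.{0} → Ordinal.{0}}
    (hg : MapsTo g (Iio lam.ord) (Iio lam.ord)) : ∃ a ∈ S, MapsTo g a a := by
  obtain ⟨a, haS, haC⟩ := hstat _ (isClubPkl_clubOf_ofUnary kap hg)
  exact ⟨a, haS, fun x hx => haC.2.1 _ rfl (fun _ => x) fun _ => hx⟩

theorem exists_mapsTo_apply_notMem_of_injOn {lam kap : Cardinal.{0}} (hkl : kap ≤ lam)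
    {S : Set (Set Ordinal.{0})} (hS : S ⊆ smallSubsets lam kap)
    {f : Set Ordinal.{0} → Ordinal.{0}} (hinj : InjOn f S) :
    ∃ g : Ordinal.{0} → Ordinal.{0}, MapsTo g (Iio lam.ord) (Iio lam.ord) ∧
      ∀ a ∈ S, g (f a) ∉ a := by
  have escape : ∀ γ : Ordinal.{0}, ∃ x : Ordinal.{0},
      (γ < lam.ord → x < lam.ord) ∧ ∀ a ∈ S, f a = γ → x ∉ a := by
    intro γ
    by_cases hγ : ∃ a ∈ S, f a = γ
    · obtain ⟨a, haS, rfl⟩ := hγ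
      obtain ⟨x, hx, hxa⟩ := exists_lt_ord_notMem_of_mem_smallSubsets hkl (hS haS)
      exact ⟨x, fun _ => hx, fun b hbS hfb => hinj hbS haS hfb ▸ hxa⟩
    · exact ⟨γ, id, fun a haS hfa => (hγ ⟨a, haS, hfa⟩).elim⟩
  choose g hg hgS using escape
  exact ⟨g, fun γ hγ => hg γ hγ, fun a haS => hgS _ a haS rfl⟩

theorem no_injective_choice_function_on_stationary_general
    (lam kap : Cardinal.{0})
    (hkl : kap ≤ lam)
    (S : Set (Set Ordinal.{0})) (hS : S ⊆ smallSubsets lam kap)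
    (hstat : IsStationaryPkl lam kap S) :
    ¬ ∃ f : Set Ordinal.{0} → Ordinal.{0},
        Set.InjOn f S ∧ ∀ a ∈ S, f a ∈ a := by
  rintro ⟨f, hinj, hchoice⟩
  obtain ⟨g, hg, hgS⟩ := exists_mapsTo_apply_notMem_of_injOn hkl hS hinj
  obtain ⟨a, haS, hga⟩ := hstat.exists_mem_mapsTo hg
  exact hgS a haS (hga (hchoice a haS))

/-- If `κ` is regular uncountable, `λ ≥ κ` and `S ⊆ [λ]^{<κ}` is
stationary, then there is no injective choice function `f : S → λ`
(i.e. an injective `f` with `f a ∈ a` for all `a ∈ S`). -/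
theorem no_injective_choice_function_on_stationary
    (lam kap : Cardinal.{0}) (hreg : kap.IsRegular) (hunc : ℵ₀ < kap)
    (hkl : kap ≤ lam)
    (S : Set (Set Ordinal.{0})) (hS : S ⊆ smallSubsets lam kap)
    (hstat : IsStationaryPkl lam kap S) :
    ¬ ∃ f : Set Ordinal.{0} → Ordinal.{0},
        Set.InjOn f S ∧ ∀ a ∈ S, f a ∈ a :=
  no_injective_choice_function_on_stationary_general lam kap hkl S hS hstat
end
end

section
/- Assume κ is a regular uncountable cardinal, κ ≤ λ, and λ equals the cofinality of the partial order ([λ]^{<κ}, ⊆), i.e., λ is the least cardinality of a family U ⊆ [λ]^{<κ} such that every member of [λ]^{<κ} is contained in some member of U. Then every stationary subset of [λ]^{<κ} contains an unbounded non-stationary subset. -/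
open Cardinal Set

noncomputable section

/-! Fix an unbounded family `{u_α : α < λ}` in `[λ]^{<κ}`, which exists because `λ` is the
cofinality of `[λ]^{<κ}`. Every stationary `S` is unbounded, so it contains some
`b_α ⊇ u_α ∪ {α}`; the sets `b_α` form an unbounded subfamily of `S`. Choosing `g(α) ∉ b_α`
diagonalises against it: no `b_α` is closed under `g`, so the `b_α` miss the club of
`g`-closed sets. -/

universe u

theorem mk_Iio_ord (c : Cardinal.{u}) : #(Iio c.ord) = lift.{u + 1} c := by
  rw [Cardinal.mk_Iio_ordinal, card_ord]

theorem insert_mem_smallSubsets {lam kap : Cardinal.{0}} (hkap : ℵ₀ ≤ kap)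
    {a : Set Ordinal.{0}} {α : Ordinal.{0}} (hα : α < lam.ord) (ha : a ∈ smallSubsets lam kap) :
    insert α a ∈ smallSubsets lam kap := by
  refine ⟨?_, mk_insert_le.trans_lt (add_one_lt_of_lt (by simpa using hkap) ha.2)⟩
  rintro x (rfl | hx)
  exacts [hα, ha.1 x hx]

theorem exists_notMem_of_mem_smallSubsets {lam kap : Cardinal.{0}} (hkl : kap ≤ lam)
    {a : Set Ordinal.{0}} (ha : a ∈ smallSubsets lam kap) : ∃ y : Iio lam.ord, ↑y ∉ a := by
  by_contra! h
  have hle : #(Iio lam.ord) ≤ #a := mk_le_mk_of_subset fun y hy => h ⟨y, hy⟩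
  rw [mk_Iio_ord] at hle
  exact (lift_lt.1 (hle.trans_lt ha.2)).not_ge hkl

theorem exists_lt_ord_equiv_of_mk_lt {kap : Cardinal.{u}} {c : Set Ordinal.{u}}
    (hc : #c < lift.{u + 1} kap) : ∃ η < kap.ord, Nonempty (Iio η ≃ c) := by
  obtain ⟨c', hc'⟩ := mem_range_lift_of_le hc.le
  refine ⟨c'.ord, ord_lt_ord.2 ?_, Cardinal.eq.1 ?_⟩
  · rwa [← hc', lift_lt] at hc
  · rw [mk_Iio_ord, hc']

theorem Iio_subset_of_mem_clubOf {lam kap : Cardinal.{0}} {F : Set FinFun}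
    {a : Set Ordinal.{0}} (ha : a ∈ clubOf lam kap F) {η : Ordinal.{0}} (hηa : η ∈ a)
    (hηk : η < kap.ord) : Iio η ⊆ a := by
  obtain ⟨-, -, β, -, hseg⟩ := ha
  have hηβ : η ∈ Iio β := hseg ▸ ⟨hηa, hηk⟩
  intro ξ hξ
  have hξβ : ξ ∈ Iio β := lt_trans (show ξ < η from hξ) hηβ
  exact (hseg.symm ▸ hξβ : ξ ∈ a ∩ Iio kap.ord).1

/-- Off `λ` it takes the junk value `0`, which `FamOn` and closure under it never see. -/
def unaryFinFun (lam : Cardinal.{0}) (g : Iio lam.ord → Iio lam.ord) : FinFun :=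
  ⟨1, fun x => if h : x 0 < lam.ord then g ⟨x 0, h⟩ else 0⟩

theorem unaryFinFun_apply (lam : Cardinal.{0}) (g : Iio lam.ord → Iio lam.ord)
    (x : Fin 1 → Ordinal.{0}) (hx : x 0 < lam.ord) : (unaryFinFun lam g).2 x = g ⟨x 0, hx⟩ :=
  dif_pos hx

theorem famOn_singleton_unaryFinFun (lam : Cardinal.{0}) (g : Iio lam.ord → Iio lam.ord) :
    FamOn lam {unaryFinFun lam g} := by
  rintro f rfl x hx
  rw [unaryFinFun_apply lam g x (hx (0 : Fin 1))]
  exact (g _).2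

theorem apply_mem_of_mem_clubOf {lam kap : Cardinal.{0}} {F : Set FinFun}
    {a : Set Ordinal.{0}} (ha : a ∈ clubOf lam kap F) {g : Iio lam.ord → Iio lam.ord}
    (hg : unaryFinFun lam g ∈ F) {ξ : Iio lam.ord} (hξ : ↑ξ ∈ a) : ↑(g ξ) ∈ a := by
  have := ha.2.1 _ hg (fun _ => ξ) fun _ => hξ
  exact (congrArg (· ∈ a) (unaryFinFun_apply lam g (fun _ => ↑ξ) ξ.2)).mp this

theorem exists_isClubPkl_forall_superset {lam kap : Cardinal.{0}} (hkl : kap ≤ lam)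
    {c : Set Ordinal.{0}} (hc : c ∈ smallSubsets lam kap) :
    ∃ C, IsClubPkl lam kap C ∧ ∀ b ∈ C, c ⊆ b := by
  obtain ⟨η, hηk, ⟨e⟩⟩ := exists_lt_ord_equiv_of_mk_lt hc.2
  have hηl : η < lam.ord := hηk.trans_le (ord_le_ord.2 hkl)
  -- `g` enumerates `c` along `η`; closure under `g` and the constant `η` then forces `c ⊆ b`,
  -- because `b ∩ κ` is an initial segment of `κ`.
  let g : Iio lam.ord → Iio lam.ord := fun ξ =>
    if h : (ξ : Ordinal) < η then ⟨e ⟨ξ, h⟩, hc.1 _ (e ⟨ξ, h⟩).2⟩ else ⟨η, hηl⟩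
  let F : Set FinFun := {⟨0, fun _ => η⟩, unaryFinFun lam g}
  have hF : FamOn lam F := by
    rintro f (rfl | rfl)
    · exact fun _ _ => hηl
    · exact famOn_singleton_unaryFinFun lam g _ rfl
  refine ⟨_, ⟨F, (countable_singleton _).insert _, hF, rfl⟩, fun b hb y hy => ?_⟩
  have hηb : η ∈ b := hb.2.1 ⟨0, fun _ => η⟩ (mem_insert _ _) Fin.elim0 fun i => i.elim0
  obtain ⟨⟨ξ, hξ⟩, hξy⟩ := e.surjective ⟨y, hy⟩
  rw [show y = e ⟨ξ, hξ⟩ from congrArg Subtype.val hξy.symm]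
  have hξb : ξ ∈ b := Iio_subset_of_mem_clubOf hb hηb hηk hξ
  have := apply_mem_of_mem_clubOf hb (mem_insert_of_mem _ rfl) (ξ := ⟨ξ, hξ.trans hηl⟩) hξb
  simpa only [g, dif_pos (show ξ < η from hξ)] using this

theorem IsStationaryPkl.exists_superset_mem {lam kap : Cardinal.{0}} (hkl : kap ≤ lam)
    {S : Set (Set Ordinal.{0})} (hS : IsStationaryPkl lam kap S)
    {c : Set Ordinal.{0}} (hc : c ∈ smallSubsets lam kap) : ∃ b ∈ S, c ⊆ b := by
  obtain ⟨C, hC, hCc⟩ := exists_isClubPkl_forall_superset hkl hc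
  obtain ⟨b, hbS, hbC⟩ := hS C hC
  exact ⟨b, hbS, hCc b hbC⟩

theorem not_isStationaryPkl_of_forall_exists_apply_notMem {lam kap : Cardinal.{0}}
    {T : Set (Set Ordinal.{0})} (g : Iio lam.ord → Iio lam.ord)
    (hT : ∀ a ∈ T, ∃ ξ : Iio lam.ord, ↑ξ ∈ a ∧ ↑(g ξ) ∉ a) : ¬ IsStationaryPkl lam kap T := by
  intro hst
  obtain ⟨a, haT, haC⟩ :=
    hst _ ⟨_, countable_singleton _, famOn_singleton_unaryFinFun lam g, rfl⟩
  obtain ⟨ξ, hξ, hgξ⟩ := hT a haT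
  exact hgξ (apply_mem_of_mem_clubOf haC rfl hξ)

theorem exists_unbounded_mk_eq_of_cf_eq {lam kap : Cardinal.{0}}
    (hcf : lift.{1} lam = sInf {c : Cardinal.{1} | ∃ U ⊆ smallSubsets lam kap,
        IsUnbounded lam kap U ∧ #U = c}) :
    ∃ U ⊆ smallSubsets lam kap, IsUnbounded lam kap U ∧ #U = lift.{1} lam := by
  have hunb : IsUnbounded lam kap (smallSubsets lam kap) := fun b hb => ⟨b, hb, subset_rfl⟩
  exact hcf ▸ csInf_mem (s := {c | ∃ U ⊆ smallSubsets lam kap, IsUnbounded lam kap U ∧ #U = c})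
    ⟨_, _, subset_rfl, hunb, rfl⟩

theorem stationary_contains_unbounded_nonstationary_of_cf_eq_general
    (lam kap : Cardinal.{0}) (hunc : ℵ₀ < kap)
    (hkl : kap ≤ lam)
    (hcf : Cardinal.lift.{1} lam =
      sInf {c : Cardinal.{1} | ∃ U ⊆ smallSubsets lam kap,
        IsUnbounded lam kap U ∧ Cardinal.mk ↥U = c}) :
    ∀ S ⊆ smallSubsets lam kap, IsStationaryPkl lam kap S →
      ∃ T ⊆ S, IsUnbounded lam kap T ∧ ¬ IsStationaryPkl lam kap T := by
  intro S hSsub hS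
  obtain ⟨U, hUsub, hUunb, hUmk⟩ := exists_unbounded_mk_eq_of_cf_eq hcf
  obtain ⟨e⟩ : Nonempty (Iio lam.ord ≃ U) := Cardinal.eq.1 (by rw [mk_Iio_ord, hUmk])
  have hb (α : Iio lam.ord) : ∃ b ∈ S, insert ↑α (e α : Set Ordinal) ⊆ b :=
    hS.exists_superset_mem hkl (insert_mem_smallSubsets hunc.le α.2 (hUsub (e α).2))
  choose b hbS hb using hb
  have hg (α : Iio lam.ord) : ∃ y : Iio lam.ord, ↑y ∉ b α :=
    exists_notMem_of_mem_smallSubsets hkl (hSsub (hbS α))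
  choose g hg using hg
  refine ⟨range b, range_subset_iff.2 hbS, fun d hd => ?_, ?_⟩
  · obtain ⟨u, hu, hdu⟩ := hUunb d hd
    refine ⟨b (e.symm ⟨u, hu⟩), mem_range_self _, hdu.trans ?_⟩
    simpa using (subset_insert _ _).trans (hb (e.symm ⟨u, hu⟩))
  · refine not_isStationaryPkl_of_forall_exists_apply_notMem g ?_
    rintro _ ⟨α, rfl⟩
    exact ⟨α, hb α (mem_insert _ _), hg α⟩

/-- If `κ` is regular uncountable, `κ ≤ λ`, and `λ` is the cofinality of
`([λ]^{<κ}, ⊆)`, i.e. the least cardinality of an unbounded family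
`U ⊆ [λ]^{<κ}`, then every stationary subset of `[λ]^{<κ}` contains an
unbounded non-stationary subset. -/
theorem stationary_contains_unbounded_nonstationary_of_cf_eq
    (lam kap : Cardinal.{0}) (hreg : kap.IsRegular) (hunc : ℵ₀ < kap)
    (hkl : kap ≤ lam)
    (hcf : Cardinal.lift.{1} lam =
      sInf {c : Cardinal.{1} | ∃ U ⊆ smallSubsets lam kap,
        IsUnbounded lam kap U ∧ Cardinal.mk ↥U = c}) :
    ∀ S ⊆ smallSubsets lam kap, IsStationaryPkl lam kap S →
      ∃ T ⊆ S, IsUnbounded lam kap T ∧ ¬ IsStationaryPkl lam kap T :=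
  stationary_contains_unbounded_nonstationary_of_cf_eq_general lam kap hunc hkl hcf
end
end
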